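/- Let n ≥ 71, let s, a_1, a_2, a_3 ≥ 0, and let k = #{i ∈ {1,2,3} : a_i ≠ 0}. For EVERY choice of vectors ℓ_1, m_1, …, ℓ_s, m_s ∈ U and, for each i with a_i ≠ 0, vectors ℓ_{i,1}, m_{i,1}, …, ℓ_{i,a_i}, m_{i,a_i} ∈ U_i, the subspace W = Σ_{i : a_i≠0} ( S_3(U_i) + Σ_{j=1}^{a_i} (ℓ_{i,j}²·U + ℓ_{i,j}·m_{i,j}·U) ) + Σ_{i=1}^s (ℓ_i²·U + ℓ_i·m_i·U) of the degree-3 forms satisfies dim_ℂ W ≤ min{ Σ_{j=1}^k (−1)^{j−1} C(k,j)·C(n−24j+3,3) + 48(a_1+a_2+a_3) + (2n+1)s , C(n+3,3) }. -/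

import Mathlib

/-!
Each summand of `W` is contained either in a span of few cubic monomials or in a small space.
Write `B_i` for the `i`-th block of 24 variables. `S_3(U_i)` is spanned by the cubic monomials
avoiding `B_i`, and if `ℓ, m ∈ U_i` then `ℓ²·U + ℓm·U` lies in `S_3(U_i)` plus the span of the
48 forms `ℓ²x_j, ℓm x_j` with `j ∈ B_i`. Any tangent space `ℓ²·U + ℓm·U` has dimension at most
`2n + 1`, because both summands contain `ℓ²m`. Hence `dim W` is bounded by the number of cubic
monomials avoiding some `B_i` with `a_i ≠ 0`, which inclusion–exclusion over the disjoint blocks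
evaluates to the alternating sum, plus `48(a_1 + a_2 + a_3) + (2n + 1)s`. The other bound is the
number of all cubic monomials.
-/

open MvPolynomial

/-- The linear form associated with a coefficient vector `v ∈ ℂ^{n+1}`. -/
noncomputable def lin {n : ℕ} (v : Fin (n + 1) → ℂ) : MvPolynomial (Fin (n + 1)) ℂ :=
  ∑ j, MvPolynomial.C (v j) * MvPolynomial.X j

/-- The subspace `f·U = {f·u : u ∈ U}` of the polynomial ring, where `U` is the
space of linear forms. -/
noncomputable def mulU {n : ℕ} (f : MvPolynomial (Fin (n + 1)) ℂ) :
    Submodule ℂ (MvPolynomial (Fin (n + 1)) ℂ) :=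
  Submodule.span ℂ (Set.range fun j : Fin (n + 1) => f * MvPolynomial.X j)

/-- The affine cone `ℓ^{d-1}·U + ℓ^{d-2}·m·U` over the tangent space to the tangential
variety `T_{n,d}` of the `d`-th Veronese variety at the point `[ℓ^{d-1} m]`. -/
noncomputable def tanCone {n : ℕ} (d : ℕ) (ℓ m : Fin (n + 1) → ℂ) :
    Submodule ℂ (MvPolynomial (Fin (n + 1)) ℂ) :=
  mulU (lin ℓ ^ (d - 1)) ⊔ mulU (lin ℓ ^ (d - 2) * lin m)

/-- `v ∈ U_{i+1}`, i.e. the coordinates of `v` indexed by `{24i, …, 24i+23}` vanish. -/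
def memU {n : ℕ} (i : Fin 3) (v : Fin (n + 1) → ℂ) : Prop :=
  ∀ j : Fin (n + 1), 24 * (i : ℕ) ≤ (j : ℕ) → (j : ℕ) < 24 * (i : ℕ) + 24 → v j = 0

/-- `S_3(U_{i+1})`: the span of all products of three linear forms belonging to `U_{i+1}`. -/
noncomputable def S3U {n : ℕ} (i : Fin 3) : Submodule ℂ (MvPolynomial (Fin (n + 1)) ℂ) :=
  Submodule.span ℂ
    {p | ∃ a b c : Fin (n + 1) → ℂ,
      memU i a ∧ memU i b ∧ memU i c ∧ p = lin a * lin b * lin c}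

/-- `v ∈ U_K`, the span of the variables `x_0, …, x_71`. -/
def memK {n : ℕ} (v : Fin (n + 1) → ℂ) : Prop :=
  ∀ j : Fin (n + 1), 72 ≤ (j : ℕ) → v j = 0

/-- `S_3(U_K)`: the span of all products of three linear forms in `x_0, …, x_71`. -/
noncomputable def S3K (n : ℕ) : Submodule ℂ (MvPolynomial (Fin (n + 1)) ℂ) :=
  Submodule.span ℂ
    {p | ∃ a b c : Fin (n + 1) → ℂ,
      memK a ∧ memK b ∧ memK c ∧ p = lin a * lin b * lin c}

/-- The alternating sum `Σ_{j=1}^k (−1)^{j−1} C(k,j) · C(n−24j+3, 3)` (with the convention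
`C(m,3) = 0` for `m < 3`, realized by truncated subtraction `n+3−24j`). -/
def altsum (n k : ℕ) : ℤ :=
  ∑ j ∈ Finset.Icc 1 k, (-1 : ℤ) ^ (j - 1) * (k.choose j : ℤ) * ((n + 3 - 24 * j).choose 3 : ℤ)

/-- `k = #{i : a_i ≠ 0}`. -/
def kcount (a : Fin 3 → ℕ) : ℕ := (Finset.univ.filter fun i => a i ≠ 0).card

/-- The expected dimension `w(n, s; a_1, a_2, a_3)`, as an integer. -/
def expdimZ (n s : ℕ) (a : Fin 3 → ℕ) : ℤ :=
  min (altsum n (kcount a) + 48 * ((a 0 + a 1 + a 2 : ℕ) : ℤ) + (2 * n + 1) * s)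
    (((n + 3).choose 3 : ℤ))

/-- The subspace `W(n, s; a_1, a_2, a_3)` determined by the given points. -/
noncomputable def Wspace {n s : ℕ} {a : Fin 3 → ℕ}
    (ℓ m : Fin s → Fin (n + 1) → ℂ)
    (ℓ' m' : (i : Fin 3) → Fin (a i) → Fin (n + 1) → ℂ) :
    Submodule ℂ (MvPolynomial (Fin (n + 1)) ℂ) :=
  (⨆ i : {i : Fin 3 // a i ≠ 0},
      (S3U i.1 ⊔ ⨆ j : Fin (a i.1), tanCone 3 (ℓ' i.1 j) (m' i.1 j)))
    ⊔ ⨆ i : Fin s, tanCone 3 (ℓ i) (m i)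

/-- The statement `T(n, s; a_1, a_2, a_3)`: some choice of points realizes the expected
dimension `w(n, s; a_1, a_2, a_3)`. -/
def TStmt (n s : ℕ) (a : Fin 3 → ℕ) : Prop :=
  ∃ (ℓ m : Fin s → Fin (n + 1) → ℂ)
    (ℓ' m' : (i : Fin 3) → Fin (a i) → Fin (n + 1) → ℂ),
    (∀ (i : Fin 3) (j : Fin (a i)), memU i (ℓ' i j) ∧ memU i (m' i j)) ∧
    (Module.finrank ℂ (Wspace ℓ m ℓ' m') : ℤ) = expdimZ n s a

/-- `s_1(n) = 48k² + (11+4r)k + ⌊(4r²+22r+33)/48⌋` where `n = 24k + r`. -/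
def s1 (n : ℕ) : ℕ :=
  48 * (n / 24) ^ 2 + (11 + 4 * (n % 24)) * (n / 24) +
    (4 * (n % 24) ^ 2 + 22 * (n % 24) + 33) / 48

/-- `s_2(n) = s_1(n) + 1`. -/
def s2 (n : ℕ) : ℕ := s1 n + 1

/-- `t(n) = 4n − 37`. -/
def tfun (n : ℕ) : ℕ := 4 * n - 37

/-- The expected codimension `c(n)` of `W(n, t(n); s_1(n−24), 0, 0)`. -/
def cInt (n : ℕ) : ℤ :=
  ((n + 3).choose 3 : ℤ) - ((n - 21).choose 3 : ℤ) - (tfun n : ℤ) * (2 * n + 1) -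
    48 * (s1 (n - 24) : ℤ)

open Submodule Finset Module
open scoped Pointwise

theorem Finset.card_sym_eq_choose {α : Type*} [DecidableEq α] (s : Finset α) (k : ℕ) :
    #(s.sym k) = (#s + k - 1).choose k := by
  conv_lhs => rw [← s.attach_map_val, sym_map]
  rw [card_map, attach_eq_univ, sym_univ, card_univ, Sym.card_sym_eq_choose, Fintype.card_coe]

theorem Finset.inf'_sym_compl {α ι : Type*} [DecidableEq α] [Fintype α] {t : Finset ι}
    (ht : t.Nonempty) (B : ι → Finset α) (d : ℕ) :
    t.inf' ht (fun i => (B i)ᶜ.sym d) = (t.biUnion B)ᶜ.sym d := by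
  ext w
  simp only [mem_inf', mem_sym_iff, mem_compl, mem_biUnion, not_exists, not_and]
  exact ⟨fun h a ha i hi => h i hi a ha, fun h i hi a ha => h a ha i hi⟩

theorem Finset.sum_powerset_filter_nonempty_apply_card {β M : Type*} [AddCommMonoid M]
    (s : Finset β) (f : ℕ → M) :
    ∑ t ∈ s.powerset with t.Nonempty, f #t = ∑ j ∈ Icc 1 #s, (#s).choose j • f j := by
  let g : ℕ → M := fun j => if j = 0 then 0 else f j
  have hg : ∀ j ∈ Icc 1 #s, (#s).choose j • g j = (#s).choose j • f j := by
    intro j hj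
    simp only [g, if_neg (by grind : j ≠ 0)]
  calc ∑ t ∈ s.powerset with t.Nonempty, f #t = ∑ t ∈ s.powerset, g #t := by
        simp only [sum_filter, g, ← card_ne_zero, ite_not]
    _ = ∑ j ∈ Icc 1 #s, (#s).choose j • g j := by
        rw [sum_powerset_apply_card]
        refine (sum_subset (fun j hj => by grind) fun j _ hj => ?_).symm
        simp [g, show j = 0 by grind]
    _ = _ := sum_congr rfl hg

theorem Finset.card_biUnion_sym_compl {α ι : Type*} [DecidableEq α] [Fintype α] (T : Finset ι)
    (B : ι → Finset α) (hB : (T : Set ι).PairwiseDisjoint B) {b : ℕ} (hb : ∀ i ∈ T, #(B i) = b)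
    (d : ℕ) :
    (#(T.biUnion fun i => (B i)ᶜ.sym d) : ℤ) =
      ∑ j ∈ Icc 1 #T, (-1) ^ (j - 1) * ((#T).choose j : ℤ) *
        ((Fintype.card α + d - 1 - b * j).choose d : ℤ) := by
  have hinter : ∀ t : T.powerset.filter (·.Nonempty),
      #(t.1.inf' (mem_filter.1 t.2).2 fun i => (B i)ᶜ.sym d) =
        (Fintype.card α + d - 1 - b * #t.1).choose d := by
    rintro ⟨t, ht⟩
    obtain ⟨htT, -⟩ := mem_filter.1 ht
    have hcard : #(t.biUnion B) = #t * b := by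
      rw [card_biUnion (hB.subset (mem_powerset.mp htT)),
        sum_const_nat fun i hi => hb i (mem_powerset.mp htT hi)]
    have hle := card_le_univ (t.biUnion B)
    rw [inf'_sym_compl, card_sym_eq_choose, card_compl, hcard]
    congr 1
    rw [hcard] at hle
    grind
  rw [inclusion_exclusion_card_biUnion]
  simp only [hinter]
  rw [sum_coe_sort (T.powerset.filter (·.Nonempty))
    (fun t => (-1 : ℤ) ^ (#t + 1) * ((Fintype.card α + d - 1 - b * #t).choose d : ℤ)),
    sum_powerset_filter_nonempty_apply_card T
      fun k => (-1 : ℤ) ^ (k + 1) * ((Fintype.card α + d - 1 - b * k).choose d : ℤ)]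
  refine sum_congr rfl fun j hj => ?_
  rw [show j + 1 = j - 1 + 2 by grind, pow_add, nsmul_eq_mul]
  ring
section Monomials

variable {σ R : Type*} [CommSemiring R] {d : ℕ}

noncomputable def symMonomial (w : Sym σ d) : MvPolynomial σ R :=
  ((w : Multiset σ).map X).prod

variable (R) in
noncomputable def monomialSpan (F : Finset (Sym σ d)) : Submodule R (MvPolynomial σ R) :=
  span R (symMonomial '' (F : Set (Sym σ d)))

theorem monomialSpan_mono {F G : Finset (Sym σ d)} (h : F ⊆ G) :
    monomialSpan R F ≤ monomialSpan R G :=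
  span_mono (Set.image_mono (coe_subset.mpr h))

theorem mul_mul_mem_monomialSpan_sym [DecidableEq σ] (A : Finset σ)
    {f g h : MvPolynomial σ R} (hf : f ∈ span R (X '' (A : Set σ)))
    (hg : g ∈ span R (X '' (A : Set σ))) (hh : h ∈ span R (X '' (A : Set σ))) :
    f * g * h ∈ monomialSpan R (A.sym 3) := by
  set XA : Set (MvPolynomial σ R) := X '' (A : Set σ)
  have hfgh : f * g * h ∈ span R (XA * XA * XA) := by
    rw [← span_mul_span, ← span_mul_span]
    exact mul_mem_mul (mul_mem_mul hf hg) hh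
  refine span_le.mpr ?_ hfgh
  rintro _ ⟨_, ⟨_, ⟨i, hi, rfl⟩, _, ⟨j, hj, rfl⟩, rfl⟩, _, ⟨k, hk, rfl⟩, rfl⟩
  refine subset_span ⟨i ::ₛ j ::ₛ k ::ₛ .nil, mem_sym_iff.mpr fun x hx => ?_, ?_⟩
  · simp only [Sym.mem_cons, Sym.notMem_nil, or_false] at hx
    rcases hx with rfl | rfl | rfl <;> assumption
  · simp [symMonomial, Sym.coe_cons, Sym.coe_nil, mul_assoc]

variable {K : Type*} [Field K]

instance (F : Finset (Sym σ d)) : FiniteDimensional K (monomialSpan K F) := by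
  classical
  rw [monomialSpan, ← coe_image]
  infer_instance

theorem finrank_monomialSpan_le (F : Finset (Sym σ d)) :
    finrank K (monomialSpan K F) ≤ #F := by
  classical
  rw [monomialSpan, ← coe_image]
  exact (finrank_span_finset_le_card _).trans card_image_le

end Monomials

theorem Submodule.finrank_finset_sup_le_sum {K V ι : Type*} [DivisionRing K] [AddCommGroup V]
    [Module K V] (s : Finset ι) (p : ι → Submodule K V) [∀ i, FiniteDimensional K (p i)] :
    finrank K ↥(s.sup p) ≤ ∑ i ∈ s, finrank K (p i) := by
  classical
  induction s using Finset.induction_on with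
  | empty => simp
  | insert i s hi ih =>
    rw [sup_insert, sum_insert hi]
    exact (finrank_add_le_finrank_add_finrank _ _).trans (by omega)

theorem Submodule.finrank_iSup_le_sum {K V ι : Type*} [DivisionRing K] [AddCommGroup V]
    [Module K V] [Fintype ι] (p : ι → Submodule K V) [∀ i, FiniteDimensional K (p i)] :
    finrank K ↥(⨆ i, p i) ≤ ∑ i, finrank K (p i) := by
  rw [← sup_univ_eq_iSup]
  exact finrank_finset_sup_le_sum _ _

section LinearForms

variable {n : ℕ}

theorem lin_single (j : Fin (n + 1)) : lin (Pi.single j 1) = X j := by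
  rw [lin, sum_eq_single j (fun k _ hk => by simp [hk]) (by simp)]
  simp

theorem lin_mem_span_X {A : Finset (Fin (n + 1))} {v : Fin (n + 1) → ℂ}
    (hv : ∀ j ∉ A, v j = 0) : lin v ∈ span ℂ (X '' (A : Set (Fin (n + 1)))) := by
  refine sum_mem fun j _ => ?_
  by_cases hj : j ∈ A
  · rw [← smul_eq_C_mul]
    exact smul_mem _ _ (subset_span ⟨j, hj, rfl⟩)
  · simp [hv j hj]

theorem lin_mul_lin_mul_lin_mem_monomialSpan {A : Finset (Fin (n + 1))}
    {u v w : Fin (n + 1) → ℂ} (hu : ∀ j ∉ A, u j = 0) (hv : ∀ j ∉ A, v j = 0)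
    (hw : ∀ j ∉ A, w j = 0) : lin u * lin v * lin w ∈ monomialSpan ℂ (A.sym 3) :=
  mul_mul_mem_monomialSpan_sym A (lin_mem_span_X hu) (lin_mem_span_X hv) (lin_mem_span_X hw)

theorem mulU_le_iff {f : MvPolynomial (Fin (n + 1)) ℂ} {S : Submodule ℂ _} :
    mulU f ≤ S ↔ ∀ j, f * X j ∈ S := by
  rw [mulU, span_le, Set.range_subset_iff]
  rfl

theorem mul_lin_mem_mulU (f : MvPolynomial (Fin (n + 1)) ℂ) (v : Fin (n + 1) → ℂ) :
    f * lin v ∈ mulU f := by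
  rw [lin, mul_sum]
  refine sum_mem fun j _ => ?_
  rw [mul_left_comm, ← smul_eq_C_mul]
  exact smul_mem _ _ (subset_span ⟨j, rfl⟩)

instance (f : MvPolynomial (Fin (n + 1)) ℂ) : FiniteDimensional ℂ (mulU f) :=
  FiniteDimensional.span_of_finite _ (Set.finite_range _)

theorem finrank_mulU_le (f : MvPolynomial (Fin (n + 1)) ℂ) : finrank ℂ (mulU f) ≤ n + 1 :=
  (finrank_range_le_card (R := ℂ) fun j => f * X j).trans_eq (Fintype.card_fin _)

theorem mulU_zero : mulU (0 : MvPolynomial (Fin (n + 1)) ℂ) = ⊥ :=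
  eq_bot_iff.mpr (mulU_le_iff.mpr fun j => by simp)

end LinearForms

section TangentCones

variable {n : ℕ}

theorem tanCone_three (ℓ m : Fin (n + 1) → ℂ) :
    tanCone 3 ℓ m = mulU (lin ℓ ^ 2) ⊔ mulU (lin ℓ * lin m) := by
  rw [tanCone, show 3 - 2 = 1 from rfl, pow_one]

instance (d : ℕ) (ℓ m : Fin (n + 1) → ℂ) : FiniteDimensional ℂ (tanCone d ℓ m) :=
  Submodule.finiteDimensional_sup _ _

theorem finrank_tanCone_three_le (ℓ m : Fin (n + 1) → ℂ) :
    finrank ℂ (tanCone 3 ℓ m) ≤ 2 * n + 1 := by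
  rw [tanCone_three]
  have hA := finrank_mulU_le (lin ℓ ^ 2)
  have hB := finrank_mulU_le (lin ℓ * lin m)
  by_cases hℓm : lin ℓ * lin m = 0
  · rw [hℓm, mulU_zero, sup_bot_eq]
    omega
  have hne : lin ℓ ^ 2 * lin m ≠ 0 := by
    rw [sq, mul_assoc]
    exact mul_ne_zero (left_ne_zero_of_mul hℓm) hℓm
  have hmem : lin ℓ ^ 2 * lin m ∈ mulU (lin ℓ ^ 2) ⊓ mulU (lin ℓ * lin m) := by
    refine ⟨mul_lin_mem_mulU _ _, ?_⟩
    rw [show lin ℓ ^ 2 * lin m = lin ℓ * lin m * lin ℓ by ring]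
    exact mul_lin_mem_mulU _ _
  have hinf : finrank ℂ ↥(mulU (lin ℓ ^ 2) ⊓ mulU (lin ℓ * lin m)) ≠ 0 := fun h0 =>
    hne ((Submodule.mem_bot ℂ).mp (Submodule.finrank_eq_zero.mp h0 ▸ hmem))
  have := Submodule.finrank_sup_add_finrank_inf_eq (mulU (lin ℓ ^ 2)) (mulU (lin ℓ * lin m))
  omega

noncomputable def tangentSpanOn (B : Finset (Fin (n + 1))) (ℓ m : Fin (n + 1) → ℂ) :
    Submodule ℂ (MvPolynomial (Fin (n + 1)) ℂ) :=
  span ℂ ↑(B.image (fun j => lin ℓ ^ 2 * X j) ∪ B.image (fun j => lin ℓ * lin m * X j))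

instance (B : Finset (Fin (n + 1))) (ℓ m : Fin (n + 1) → ℂ) :
    FiniteDimensional ℂ (tangentSpanOn B ℓ m) :=
  FiniteDimensional.span_finset _ _

theorem finrank_tangentSpanOn_le (B : Finset (Fin (n + 1))) (ℓ m : Fin (n + 1) → ℂ) :
    finrank ℂ (tangentSpanOn B ℓ m) ≤ 2 * #B := by
  refine (finrank_span_finset_le_card _).trans ((card_union_le _ _).trans ?_)
  have h₁ := card_image_le (s := B) (f := fun j => lin ℓ ^ 2 * X j)
  have h₂ := card_image_le (s := B) (f := fun j => lin ℓ * lin m * X j)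
  omega

theorem tanCone_three_le_monomialSpan_sup {B : Finset (Fin (n + 1))} {ℓ m : Fin (n + 1) → ℂ}
    (hℓ : ∀ j ∈ B, ℓ j = 0) (hm : ∀ j ∈ B, m j = 0) :
    tanCone 3 ℓ m ≤ monomialSpan ℂ (Bᶜ.sym 3) ⊔ tangentSpanOn B ℓ m := by
  have hℓ' : ∀ j ∉ Bᶜ, ℓ j = 0 := fun j hj => hℓ j (by simpa using hj)
  have hm' : ∀ j ∉ Bᶜ, m j = 0 := fun j hj => hm j (by simpa using hj)
  have hsingle : ∀ j ∉ B, ∀ k ∉ Bᶜ, (Pi.single j 1 : Fin (n + 1) → ℂ) k = 0 := by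
    intro j hj k hk
    exact Pi.single_eq_of_ne (by rintro rfl; simp_all) _
  rw [tanCone_three]
  refine sup_le (mulU_le_iff.mpr fun j => ?_) (mulU_le_iff.mpr fun j => ?_)
  all_goals by_cases hj : j ∈ B
  · exact mem_sup_right (subset_span (mem_union_left _ (mem_image_of_mem _ hj)))
  · rw [sq, ← lin_single]
    exact mem_sup_left (lin_mul_lin_mul_lin_mem_monomialSpan hℓ' hℓ' (hsingle j hj))
  · exact mem_sup_right (subset_span (mem_union_right _ (mem_image_of_mem _ hj)))
  · rw [← lin_single]
    exact mem_sup_left (lin_mul_lin_mul_lin_mem_monomialSpan hℓ' hm' (hsingle j hj))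

theorem tanCone_three_le_monomialSpan_univ (ℓ m : Fin (n + 1) → ℂ) :
    tanCone 3 ℓ m ≤ monomialSpan ℂ (univ.sym 3) := by
  simpa [tangentSpanOn] using tanCone_three_le_monomialSpan_sup (B := ∅) (ℓ := ℓ) (m := m)
    (by simp) (by simp)

end TangentCones

def block (n : ℕ) (i : Fin 3) : Finset (Fin (n + 1)) :=
  {j | 24 * (i : ℕ) ≤ j ∧ (j : ℕ) < 24 * i + 24}

def cubicsAvoidingBlocks (n : ℕ) (a : Fin 3 → ℕ) : Finset (Sym (Fin (n + 1)) 3) :=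
  (univ.filter fun i => a i ≠ 0).biUnion fun i => (block n i)ᶜ.sym 3

section Blocks

variable {n : ℕ}

theorem memU_iff {i : Fin 3} {v : Fin (n + 1) → ℂ} : memU i v ↔ ∀ j ∈ block n i, v j = 0 := by
  simp [memU, block]

theorem card_block (hn : 71 ≤ n) (i : Fin 3) : #(block n i) = 24 := by
  have hval : (block n i).map Fin.valEmbedding = Ico (24 * (i : ℕ)) (24 * i + 24) := by
    ext x
    simp only [block, mem_map, mem_filter, mem_univ, true_and, Fin.valEmbedding_apply, mem_Ico]
    refine ⟨fun ⟨j, hj, hjx⟩ => hjx ▸ hj, fun hx => ⟨⟨x, by omega⟩, hx, rfl⟩⟩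
  rw [← card_map, hval, Nat.card_Ico]
  omega

theorem pairwiseDisjoint_block (s : Set (Fin 3)) : s.PairwiseDisjoint (block n) := by
  intro i _ i' _ hii'
  refine disjoint_left.mpr fun j hj hj' => hii' (Fin.ext ?_)
  simp only [block, mem_filter, mem_univ, true_and] at hj hj'
  omega

theorem card_cubicsAvoidingBlocks (hn : 71 ≤ n) (a : Fin 3 → ℕ) :
    (#(cubicsAvoidingBlocks n a) : ℤ) = altsum n (kcount a) := by
  rw [cubicsAvoidingBlocks, card_biUnion_sym_compl _ _ (pairwiseDisjoint_block _)
    (fun i _ => card_block hn i), Fintype.card_fin, altsum, kcount]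
  simp only [show ∀ j, n + 1 + 3 - 1 - 24 * j = n + 3 - 24 * j from fun j => by omega]

theorem S3U_le_monomialSpan (i : Fin 3) : S3U i ≤ monomialSpan ℂ ((block n i)ᶜ.sym 3) := by
  refine span_le.mpr ?_
  rintro _ ⟨u, v, w, hu, hv, hw, rfl⟩
  have hcompl : ∀ {x : Fin (n + 1) → ℂ}, memU i x → ∀ j ∉ (block n i)ᶜ, x j = 0 :=
    fun hx j hj => memU_iff.mp hx j (by simpa using hj)
  exact lin_mul_lin_mul_lin_mem_monomialSpan (hcompl hu) (hcompl hv) (hcompl hw)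

end Blocks

section Wspace

variable {n s : ℕ} {a : Fin 3 → ℕ} (ℓ m : Fin s → Fin (n + 1) → ℂ)
  (ℓ' m' : (i : Fin 3) → Fin (a i) → Fin (n + 1) → ℂ)

theorem Wspace_le_monomialSpan_univ : Wspace ℓ m ℓ' m' ≤ monomialSpan ℂ (univ.sym 3) := by
  have hS3U : ∀ i : Fin 3, S3U (n := n) i ≤ monomialSpan ℂ (univ.sym 3) := fun i =>
    (S3U_le_monomialSpan i).trans (monomialSpan_mono (sym_mono (subset_univ _) 3))
  refine sup_le (iSup_le fun i => sup_le (hS3U i) (iSup_le fun j => ?_)) (iSup_le fun i => ?_)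
  all_goals exact tanCone_three_le_monomialSpan_univ _ _

theorem finrank_Wspace_le_choose : finrank ℂ (Wspace ℓ m ℓ' m') ≤ (n + 3).choose 3 := by
  calc finrank ℂ (Wspace ℓ m ℓ' m')
      ≤ finrank ℂ (monomialSpan ℂ ((univ : Finset (Fin (n + 1))).sym 3)) :=
        Submodule.finrank_mono (Wspace_le_monomialSpan_univ ℓ m ℓ' m')
    _ ≤ #((univ : Finset (Fin (n + 1))).sym 3) := finrank_monomialSpan_le _
    _ = (n + 3).choose 3 := by rw [card_sym_eq_choose, card_univ, Fintype.card_fin]; rfl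

variable {ℓ' m'}

theorem Wspace_le_sup (hmem : ∀ (i : Fin 3) (j : Fin (a i)), memU i (ℓ' i j) ∧ memU i (m' i j)) :
    Wspace ℓ m ℓ' m' ≤
      (monomialSpan ℂ (cubicsAvoidingBlocks n a) ⊔
        ⨆ (i : {i // a i ≠ 0}) (j : Fin (a i)), tangentSpanOn (block n i) (ℓ' i j) (m' i j)) ⊔
      ⨆ i, tanCone 3 (ℓ i) (m i) := by
  refine sup_le_sup_right (iSup_le fun i => ?_) _
  have hmono : monomialSpan ℂ ((block n i)ᶜ.sym 3) ≤ monomialSpan ℂ (cubicsAvoidingBlocks n a) :=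
    monomialSpan_mono (subset_biUnion_of_mem (fun i => (block n i)ᶜ.sym 3)
      (mem_filter.mpr ⟨mem_univ _, i.2⟩))
  refine sup_le ((S3U_le_monomialSpan i.1).trans (le_sup_of_le_left hmono)) (iSup_le fun j => ?_)
  have htc := tanCone_three_le_monomialSpan_sup (memU_iff.mp (hmem i j).1)
    (memU_iff.mp (hmem i j).2)
  exact htc.trans (sup_le_sup hmono (le_iSup₂_of_le i j le_rfl))

theorem finrank_iSup_tangentSpanOn_le (hn : 71 ≤ n) :
    finrank ℂ ↥(⨆ (i : {i // a i ≠ 0}) (j : Fin (a i)),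
      tangentSpanOn (block n i) (ℓ' i j) (m' i j)) ≤ 48 * (a 0 + a 1 + a 2) :=
  calc _ ≤ ∑ i : {i // a i ≠ 0}, ∑ j : Fin (a i),
        finrank ℂ (tangentSpanOn (block n i) (ℓ' i j) (m' i j)) :=
        (finrank_iSup_le_sum _).trans (sum_le_sum fun i _ => finrank_iSup_le_sum _)
    _ ≤ ∑ i : {i // a i ≠ 0}, ∑ j : Fin (a i), 48 := by
        gcongr with i _ j _
        exact (finrank_tangentSpanOn_le _ _ _).trans_eq (by rw [card_block hn])
    _ = 48 * (a 0 + a 1 + a 2) := by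
        simp only [sum_const, card_univ, Fintype.card_fin, smul_eq_mul, ← sum_mul]
        rw [← sum_subtype (univ.filter fun i => a i ≠ 0) (by simp) a, sum_filter_ne_zero,
          Fin.sum_univ_three, mul_comm]

theorem finrank_iSup_tanCone_le :
    finrank ℂ ↥(⨆ i, tanCone 3 (ℓ i) (m i)) ≤ (2 * n + 1) * s :=
  (finrank_iSup_le_sum _).trans
    ((sum_le_sum fun i _ => finrank_tanCone_three_le (ℓ i) (m i)).trans_eq (by simp [mul_comm]))

theorem finrank_Wspace_le (hn : 71 ≤ n)
    (hmem : ∀ (i : Fin 3) (j : Fin (a i)), memU i (ℓ' i j) ∧ memU i (m' i j)) :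
    finrank ℂ (Wspace ℓ m ℓ' m') ≤
      #(cubicsAvoidingBlocks n a) + 48 * (a 0 + a 1 + a 2) + (2 * n + 1) * s := by
  refine (Submodule.finrank_mono (Wspace_le_sup ℓ m hmem)).trans <|
    (finrank_add_le_finrank_add_finrank _ _).trans <| add_le_add ?_ (finrank_iSup_tanCone_le ℓ m)
  exact (finrank_add_le_finrank_add_finrank _ _).trans <|
    add_le_add (finrank_monomialSpan_le _) (finrank_iSup_tangentSpanOn_le hn)

end Wspace

/-- Proposition 3.5: for every choice of points, the subspace `W(n,s;a_1,a_2,a_3)` has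
dimension at most the expected dimension `w(n,s;a_1,a_2,a_3)`. -/
theorem Wspace_dim_le_expected (n : ℕ) (hn : 71 ≤ n) (s : ℕ) (a : Fin 3 → ℕ)
    (ℓ m : Fin s → Fin (n + 1) → ℂ)
    (ℓ' m' : (i : Fin 3) → Fin (a i) → Fin (n + 1) → ℂ)
    (hmem : ∀ (i : Fin 3) (j : Fin (a i)), memU i (ℓ' i j) ∧ memU i (m' i j)) :
    (Module.finrank ℂ (Wspace ℓ m ℓ' m') : ℤ) ≤ expdimZ n s a := by
  rw [expdimZ, le_min_iff, ← card_cubicsAvoidingBlocks hn]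
  exact ⟨by exact_mod_cast finrank_Wspace_le ℓ m hn hmem,
    by exact_mod_cast finrank_Wspace_le_choose ℓ m ℓ' m'⟩
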